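/- Degenerate Funk parabola of type 1: let y₀ ∈ (−1,1), let the focus F = (f₀, y₀) ∈ B² lie on the directrix s: y = y₀, and let P = (x,y) ∈ B² with P ≠ F. Then d_F(F,P) = ln ρ(y₀, y) holds if and only if x·(1 + sgn(y₀−y)·y₀) = f₀·(1 + sgn(y₀−y)·y); that is, P lies on the line segment (1−y₀)x − f₀(1−y) = 0 when y > y₀, or on the line segment (1+y₀)x − f₀(1+y) = 0 when y < y₀. -/

import Mathlib

/-- The Funk distance on the open unit ball of Euclidean n-space:
`d_F(P,Q) = ln((√k − ⟨P, Q−P⟩)/(√k − ⟨Q, Q−P⟩))` with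
`k = ⟨P, Q−P⟩² + (1 − ‖P‖²)‖Q−P‖²`. -/
noncomputable def funkDist {n : ℕ} (P Q : EuclideanSpace ℝ (Fin n)) : ℝ :=
  Real.log
    ((Real.sqrt ((inner ℝ P (Q - P) : ℝ) ^ 2 + (1 - ‖P‖ ^ 2) * ‖Q - P‖ ^ 2) - (inner ℝ P (Q - P) : ℝ)) /
     (Real.sqrt ((inner ℝ P (Q - P) : ℝ) ^ 2 + (1 - ‖P‖ ^ 2) * ‖Q - P‖ ^ 2) - (inner ℝ Q (Q - P) : ℝ)))

/-- `ρ(ε,η) = (1 + sgn(ε−η)·ε)/(1 + sgn(ε−η)·η)`. -/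
noncomputable def rho (ε η : ℝ) : ℝ :=
  (1 + Real.sign (ε - η) * ε) / (1 + Real.sign (ε - η) * η)

/-- The point `(a,b)` of the Euclidean plane. -/
def pt (a b : ℝ) : EuclideanSpace ℝ (Fin 2) := WithLp.toLp 2 ![a, b]

/-!
If the ray from `P` through `Q` leaves the disk at `P + t • (Q - P)` (so `t > 1`), then
`d_F(P, Q) = ln (t / (t - 1))`, and `t ↦ t / (t - 1)` is injective on `(1, ∞)`. For `y ≠ y₀`,
put `s = sgn(y₀ - y)`: the ray from `F` through `P` meets the line `y = -s` at a parameter `t'`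
with `t' / (t' - 1) = ρ(y₀, y)`. So `d_F(F, P) = ln ρ(y₀, y)` iff the ray leaves the disk
exactly on that line, i.e. through `(0, -s)`, i.e. iff `F`, `P` and `(0, -s)` are collinear. For
`y = y₀` both sides fail: `d_F(F, P) > 0 = ln ρ(y₀, y₀)`, and the equation reads `x = f₀`.
-/

theorem exists_one_lt_norm_add_smul_sub_eq_one {E : Type*} [NormedAddCommGroup E]
    [NormedSpace ℝ E] {P Q : E} (hQ : ‖Q‖ < 1) (hne : P ≠ Q) :
    ∃ t : ℝ, 1 < t ∧ ‖P + t • (Q - P)‖ = 1 := by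
  have hu : 0 < ‖Q - P‖ := norm_pos_iff.mpr (sub_ne_zero.mpr hne.symm)
  set T := 1 + (1 + ‖P‖) / ‖Q - P‖
  have hT : 1 ≤ T := le_add_of_nonneg_right (by positivity)
  have hfar : 1 < ‖P + T • (Q - P)‖ := by
    have hTu : T * ‖Q - P‖ = ‖Q - P‖ + (1 + ‖P‖) := by
      simp only [T]; field_simp
    calc 1 < T * ‖Q - P‖ - ‖P‖ := by linarith
      _ = ‖T • (Q - P)‖ - ‖P‖ := by
        rw [norm_smul, Real.norm_of_nonneg (by linarith)]
      _ ≤ ‖P + T • (Q - P)‖ := by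
        have := norm_sub_le (P + T • (Q - P)) P
        rw [add_sub_cancel_left] at this
        linarith
  have hcont : ContinuousOn (fun t : ℝ => ‖P + t • (Q - P)‖) (Set.Icc 1 T) := by fun_prop
  obtain ⟨t, ⟨ht1, -⟩, ht⟩ := intermediate_value_Ioc hT hcont ⟨by simpa using hQ, hfar.le⟩
  exact ⟨t, ht1, ht⟩

theorem funkDist_eq_log_of_norm_add_smul_sub_eq_one {n : ℕ} {P Q : EuclideanSpace ℝ (Fin n)}
    {t : ℝ} (hP : ‖P‖ < 1) (ht : 0 < t) (hexit : ‖P + t • (Q - P)‖ = 1) :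
    funkDist P Q = Real.log (t / (t - 1)) := by
  set a : ℝ := inner ℝ P (Q - P)
  set w := ‖Q - P‖ ^ 2
  have hQ : (inner ℝ Q (Q - P) : ℝ) = a + w := by
    rw [show Q = P + (Q - P) by abel, add_sub_cancel_left, inner_add_left, real_inner_self_eq_norm_sq]
  have hquad : ‖P‖ ^ 2 + 2 * t * a + t ^ 2 * w = 1 := by
    calc ‖P‖ ^ 2 + 2 * t * a + t ^ 2 * w = ‖P + t • (Q - P)‖ ^ 2 := by
          rw [norm_add_sq_real, inner_smul_right, norm_smul, Real.norm_of_nonneg ht.le]; ring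
      _ = 1 := by rw [hexit, one_pow]
  have hw : 0 < w := by
    have hu : Q - P ≠ 0 := by
      rintro hu
      rw [hu, smul_zero, add_zero] at hexit
      linarith
    exact pow_pos (norm_pos_iff.mpr hu) 2
  -- `t w + a` is the positive root of the quadratic `X² = a² + (1 - ‖P‖²) w`
  have hroot : Real.sqrt (a ^ 2 + (1 - ‖P‖ ^ 2) * w) = t * w + a := by
    have hpos : 0 < t * w + a := by nlinarith [mul_pos ht hw, sq_nonneg ‖P‖, norm_nonneg P]
    rw [Real.sqrt_eq_iff_mul_self_eq_of_pos hpos]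
    linear_combination w * hquad
  rw [funkDist, hQ, hroot, add_sub_cancel_right, show t * w + a - (a + w) = (t - 1) * w by ring,
    mul_div_mul_right _ _ hw.ne']

theorem funkDist_eq_log_iff_norm_add_smul_sub_eq_one {n : ℕ} {P Q : EuclideanSpace ℝ (Fin n)}
    {t : ℝ} (hP : ‖P‖ < 1) (hQ : ‖Q‖ < 1) (hne : P ≠ Q) (ht : 1 < t) :
    funkDist P Q = Real.log (t / (t - 1)) ↔ ‖P + t • (Q - P)‖ = 1 := by
  refine ⟨fun hdist => ?_, funkDist_eq_log_of_norm_add_smul_sub_eq_one hP (by linarith)⟩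
  obtain ⟨t₀, ht₀, hexit⟩ := exists_one_lt_norm_add_smul_sub_eq_one hQ hne
  rw [funkDist_eq_log_of_norm_add_smul_sub_eq_one hP (by linarith) hexit] at hdist
  have hratio := Real.log_injOn_pos (div_pos (by linarith) (by linarith : (0 : ℝ) < t₀ - 1))
    (div_pos (by linarith) (by linarith : (0 : ℝ) < t - 1)) hdist
  rw [div_eq_div_iff (by linarith) (by linarith)] at hratio
  rwa [show t = t₀ by linarith]

theorem funkDist_pos {n : ℕ} {P Q : EuclideanSpace ℝ (Fin n)} (hP : ‖P‖ < 1) (hQ : ‖Q‖ < 1)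
    (hne : P ≠ Q) : 0 < funkDist P Q := by
  obtain ⟨t, ht, hexit⟩ := exists_one_lt_norm_add_smul_sub_eq_one hQ hne
  rw [funkDist_eq_log_of_norm_add_smul_sub_eq_one hP (by linarith) hexit]
  exact Real.log_pos ((one_lt_div (by linarith)).mpr (by linarith))

theorem norm_pt_sq (a b : ℝ) : ‖pt a b‖ ^ 2 = a ^ 2 + b ^ 2 := by
  rw [EuclideanSpace.norm_eq, Real.sq_sqrt (by positivity)]
  simp [pt, Fin.sum_univ_two]

theorem pt_add_smul_sub (a b c d t : ℝ) :
    pt a b + t • (pt c d - pt a b) = pt (a + t * (c - a)) (b + t * (d - b)) := by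
  ext i; fin_cases i <;> simp [pt]

theorem funkDist_pt_eq_log_iff {f₀ y₀ x y s : ℝ} (hs : s = -1 ∨ s = 1) (hsy : 0 < s * (y₀ - y))
    (hF : ‖pt f₀ y₀‖ < 1) (hP : ‖pt x y‖ < 1) :
    funkDist (pt f₀ y₀) (pt x y) = Real.log ((1 + s * y₀) / (1 + s * y)) ↔
      x * (1 + s * y₀) = f₀ * (1 + s * y) := by
  have hss : s ^ 2 = 1 := by rcases hs with rfl | rfl <;> norm_num
  have hP2 := norm_pt_sq x y
  have hy : 0 < 1 + s * y := by
    rcases hs with rfl | rfl <;> nlinarith [norm_nonneg (pt x y), sq_nonneg x]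
  have hne : pt f₀ y₀ ≠ pt x y := fun h => by
    rw [show y = y₀ by simpa [pt] using congrArg (· 1) h.symm, sub_self, mul_zero] at hsy
    exact lt_irrefl 0 hsy
  have hs0 : s ≠ 0 := by rintro rfl; simp at hss
  have hy0 : y₀ - y ≠ 0 := by rintro h; simp [h] at hsy
  -- the ray from `F` through `P` meets the line `y = -s` at `F + t • (P - F)`
  set t := (1 + s * y₀) / (s * (y₀ - y))
  have ht : t - 1 = (1 + s * y) / (s * (y₀ - y)) := by
    rw [div_sub_one hsy.ne']; ring
  have ht1 : 1 < t := by linarith [div_pos hy hsy]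
  have hρ : (1 + s * y₀) / (1 + s * y) = t / (t - 1) := by
    rw [ht, div_div_div_cancel_right₀ hsy.ne']
  have hexit : pt f₀ y₀ + t • (pt x y - pt f₀ y₀) = pt (f₀ + t * (x - f₀)) (-s) := by
    rw [pt_add_smul_sub]; congr 1
    simp only [t]; field_simp; linear_combination (y₀ - y) * hss
  rw [hρ, funkDist_eq_log_iff_norm_add_smul_sub_eq_one hF hP hne ht1, hexit,
    ← pow_eq_one_iff_of_nonneg (norm_nonneg _) two_ne_zero, norm_pt_sq]
  have hx : f₀ + t * (x - f₀) = (x * (1 + s * y₀) - f₀ * (1 + s * y)) / (s * (y₀ - y)) := by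
    simp only [t]; field_simp; ring
  rw [hx, neg_sq, hss, add_eq_right, sq_eq_zero_iff, div_eq_zero_iff, sub_eq_zero]
  exact or_iff_left hsy.ne'

theorem funk_parabola_stmt6_general (y₀ f₀ x y : ℝ)
    (hF : ‖pt f₀ y₀‖ < 1) (hP : ‖pt x y‖ < 1) (hne : pt x y ≠ pt f₀ y₀) :
    funkDist (pt f₀ y₀) (pt x y) = Real.log (rho y₀ y) ↔
      x * (1 + Real.sign (y₀ - y) * y₀) = f₀ * (1 + Real.sign (y₀ - y) * y) := by
  rcases eq_or_ne y₀ y with rfl | hy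
  · have hx : x ≠ f₀ := fun hx => hne (by rw [hx])
    simp only [rho, sub_self, Real.sign_zero, zero_mul, add_zero, div_one, Real.log_one, mul_one]
    exact iff_of_false (funkDist_pos hF hP hne.symm).ne' hx
  · exact funkDist_pt_eq_log_iff (Real.sign_apply_eq_of_ne_zero _ (sub_ne_zero.mpr hy))
      (Real.sign_mul_pos_of_ne_zero _ (sub_ne_zero.mpr hy)) hF hP

/-- Degenerate type-1 Funk parabola: if the focus `F = (f₀, y₀)` lies on the directrix
`y = y₀`, then for `P = (x,y) ≠ F` in the disk, `d_F(F,P) = ln ρ(y₀,y)` iff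
`x·(1 + sgn(y₀−y)·y₀) = f₀·(1 + sgn(y₀−y)·y)`. -/
theorem funk_parabola_stmt6 (y₀ f₀ x y : ℝ) (hy₀ : -1 < y₀ ∧ y₀ < 1)
    (hF : ‖pt f₀ y₀‖ < 1) (hP : ‖pt x y‖ < 1) (hne : pt x y ≠ pt f₀ y₀) :
    funkDist (pt f₀ y₀) (pt x y) = Real.log (rho y₀ y) ↔
      x * (1 + Real.sign (y₀ - y) * y₀) = f₀ * (1 + Real.sign (y₀ - y) * y) :=
  funk_parabola_stmt6_general y₀ f₀ x y hF hP hne
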